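/- Let a group G act on a set X, let b ∈ X be a point whose orbit is all of X, and let R be a G-invariant binary relation on X (i.e. R(x,y) implies R(g•x, g•y) for all g ∈ G). Then the set H = {g ∈ G : R(g•b, b)} is a subgroup of G if and only if R is an equivalence relation on X. -/
import Mathlib


/-- A group acting on X, b a point with full orbit, R a G-invariant relation.
Then {g : R(g•b, b)} is a subgroup iff R is an equivalence relation. -/
theorem stmt0 {G X : Type*} [Group G] [MulAction G X] (b : X)
    (horb : ∀ x : X, ∃ g : G, g • b = x)
    (R : X → X → Prop)
    (hinv : ∀ (g : G) (x y : X), R x y → R (g • x) (g • y)) :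
    (∃ H : Subgroup G, ∀ g : G, g ∈ H ↔ R (g • b) b) ↔ Equivalence R := by
  constructor
  · rintro ⟨H, hH⟩
    have refl : ∀ x : X, R x x := by
      intro x
      obtain ⟨g, rfl⟩ := horb x
      have h1 : R b b := by simpa using (hH 1).mp H.one_mem
      exact hinv g _ _ h1
    constructor
    · exact refl
    · intro x y hxy
      obtain ⟨g, rfl⟩ := horb x
      obtain ⟨h, rfl⟩ := horb y
      have h1 : R ((h⁻¹ * g) • b) b := by
        have := hinv h⁻¹ _ _ hxy
        simpa [mul_smul] using this
      have h2 : (h⁻¹ * g)⁻¹ ∈ H := H.inv_mem ((hH _).mpr h1)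
      have h3 : R ((g⁻¹ * h) • b) b := by
        have := (hH _).mp h2
        simpa using this
      have := hinv g _ _ h3
      simpa [mul_smul] using this
    · intro x y z hxy hyz
      obtain ⟨g, rfl⟩ := horb x
      obtain ⟨h, rfl⟩ := horb y
      obtain ⟨k, rfl⟩ := horb z
      have h1 : (h⁻¹ * g) ∈ H := (hH _).mpr (by simpa [mul_smul] using hinv h⁻¹ _ _ hxy)
      have h2 : (k⁻¹ * h) ∈ H := (hH _).mpr (by simpa [mul_smul] using hinv k⁻¹ _ _ hyz)
      have h3 : (k⁻¹ * g) ∈ H := by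
        have := H.mul_mem h2 h1
        simpa [mul_assoc] using this
      have := hinv k _ _ ((hH _).mp h3)
      simpa [mul_smul] using this
  · intro hR
    refine ⟨{ carrier := {g : G | R (g • b) b}
              one_mem' := by simpa using hR.refl b
              mul_mem' := ?_
              inv_mem' := ?_ }, fun g => Iff.rfl⟩
    · intro g h hg hh
      have : R (g • h • b) (g • b) := hinv g _ _ hh
      simpa [mul_smul] using hR.trans this hg
    · intro g hg
      have := hinv g⁻¹ _ _ hg
      simp only [inv_smul_smul] at this
      exact hR.symm this
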